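/- Let 1 > α > β > 0, q_1, q_2 > 0, let ℓ be a nonnegative integer with ℓ ≤ β/(2(α−β)), and let u_n = B_1 (n+1)^{−β/2}√(ln(B_2(n+1))) + B_3 (n+1)^{−(α−β)ℓ}, where B_1, B_3 ≥ 0 with at least one strictly positive and B_2 ≥ 1. Then u is α-moderate from K_α(β/2) onwards and β-moderate from K_β(β/2) onwards (with the explicit thresholds K_α(z), K_β(z)), and u is monotonically decreasing from e^{1/β}/B_2 onwards. -/

import Mathlib

/-!
With `r = (x + 1) / x` the step-size factor `(α_{k+1}/α_k)(β_k/β_{k+1})` is `r ^ (β - α)`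
(at `x = k + 1`). Each summand of `u` is `x ^ (-γ)` times a nondecreasing factor, with
`γ ≤ β / 2`, and `x ^ (-γ) = r ^ γ (x + 1) ^ (-γ)` with
`r ^ γ ≤ r ^ (β - α) r ^ c ≤ r ^ (β - α) exp (c / x)` for `c = α - β + β / 2`. So
`u_k ≤ r ^ (β - α) exp E u_{k+1}` as soon as `c / (k + 1) ≤ E`, and the thresholds
`K_α`, `K_β` are chosen so that `E = (q₁/2) α_{k+1}` resp. `E = (q₂/2) β_{k+2}` qualifies.
Monotonicity comes from `log y / y ^ β` decreasing for `y ≥ e ^ (1/β)`.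
-/

noncomputable section

/-- Stepsizes `(n+1)^{-a}`. -/
def steps (a : ℝ) (n : ℕ) : ℝ := ((n : ℝ) + 1) ^ (-a)

/-- A sequence `u` is `α`-moderate (parameters `α, β, q₁`) from `k₀` onwards if
`u_k / u_{k+1} ≤ (α_{k+1}/α_k)(β_k/β_{k+1}) e^{(q₁/2) α_{k+1}}` for all `k ≥ k₀`. -/
def AlphaModerateFrom (α β q1 : ℝ) (u : ℕ → ℝ) (k0 : ℕ) : Prop :=
  ∀ k : ℕ, k0 ≤ k →
    u k / u (k + 1) ≤
      (steps α (k + 1) / steps α k) * (steps β k / steps β (k + 1)) *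
        Real.exp (q1 / 2 * steps α (k + 1))

/-- A sequence `u` is `β`-moderate (parameters `α, β, q₂`) from `k₀` onwards if
`u_k / u_{k+1} ≤ (α_{k+1}/α_k)(β_k/β_{k+1}) e^{(q₂/2) β_{k+2}}` for all `k ≥ k₀`. -/
def BetaModerateFrom (α β q2 : ℝ) (u : ℕ → ℝ) (k0 : ℕ) : Prop :=
  ∀ k : ℕ, k0 ≤ k →
    u k / u (k + 1) ≤
      (steps α (k + 1) / steps α k) * (steps β k / steps β (k + 1)) *
        Real.exp (q2 / 2 * steps β (k + 2))

open Real

lemma rpow_neg_div_mul_rpow_neg_div {a b : ℝ} (ha : 0 < a) (hb : 0 < b) (α β : ℝ) :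
    b ^ (-α) / a ^ (-α) * (a ^ (-β) / b ^ (-β)) = (b / a) ^ (β - α) := by
  rw [div_rpow hb.le ha.le, show β - α = -α - -β by ring, rpow_sub hb, rpow_sub ha]
  field_simp

lemma div_add_one_rpow_le_exp {x c : ℝ} (hx : 0 < x) (hc : 0 ≤ c) :
    ((x + 1) / x) ^ c ≤ exp (c / x) := by
  have hr : (x + 1) / x ≤ exp (1 / x) := by
    rw [add_div, div_self hx.ne', add_comm]
    exact add_one_le_exp _
  calc ((x + 1) / x) ^ c ≤ exp (1 / x) ^ c := by gcongr
    _ = exp (c / x) := by rw [← exp_mul, one_div_mul_eq_div]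

lemma rpow_neg_le_mul_rpow_neg_add_one {x γ ρ c E : ℝ} (hx : 0 < x) (hc : 0 ≤ c)
    (hγ : γ - ρ ≤ c) (hE : c / x ≤ E) :
    x ^ (-γ) ≤ ((x + 1) / x) ^ ρ * exp E * (x + 1) ^ (-γ) := by
  set r := (x + 1) / x
  have hr : 1 ≤ r := by rw [le_div_iff₀ hx]; linarith
  have hsplit : x ^ (-γ) = r ^ γ * (x + 1) ^ (-γ) := by
    rw [div_rpow (by linarith) hx.le, rpow_neg hx.le, rpow_neg (by linarith)]
    field_simp
  calc x ^ (-γ) = r ^ ρ * r ^ (γ - ρ) * (x + 1) ^ (-γ) := by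
        rw [hsplit, ← rpow_add (by linarith), add_sub_cancel]
    _ ≤ r ^ ρ * r ^ c * (x + 1) ^ (-γ) := by gcongr
    _ ≤ r ^ ρ * exp E * (x + 1) ^ (-γ) := by
        gcongr
        exact (div_add_one_rpow_le_exp hx hc).trans (exp_le_exp.mpr hE)

lemma div_le_half_mul_rpow_neg {s q c x m : ℝ} (hs0 : 0 ≤ s) (hs1 : s < 1) (hq : 0 < q)
    (hc : 0 ≤ c) (hx : 0 < x) (hm : 0 < m) (hmx : m ≤ 2 * x)
    (hK : (4 * c / q) ^ (1 / (1 - s)) ≤ x) :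
    c / x ≤ q / 2 * m ^ (-s) := by
  have hxs : 4 * c / q ≤ x ^ (1 - s) := by
    calc 4 * c / q = ((4 * c / q) ^ (1 - s)⁻¹) ^ (1 - s) :=
          (rpow_inv_rpow (by positivity) (by linarith)).symm
      _ ≤ x ^ (1 - s) := by rw [← one_div]; gcongr
  have hms : m ^ s ≤ 2 * x ^ s :=
    calc m ^ s ≤ (2 * x) ^ s := by gcongr
      _ = 2 ^ s * x ^ s := mul_rpow (by norm_num) hx.le
      _ ≤ 2 ^ (1 : ℝ) * x ^ s := by gcongr; norm_num
      _ = 2 * x ^ s := by rw [rpow_one]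
  rw [rpow_neg hm.le, ← div_eq_mul_inv, div_le_div_iff₀ hx (by positivity)]
  calc c * m ^ s ≤ c * (2 * x ^ s) := by gcongr
    _ = q / 2 * (4 * c / q) * x ^ s := by field_simp; ring
    _ ≤ q / 2 * x ^ (1 - s) * x ^ s := by gcongr
    _ = q / 2 * x := by rw [mul_assoc, ← rpow_add hx, sub_add_cancel, rpow_one]

lemma rpow_neg_mul_log_mul_le_of_le {β B x y : ℝ} (hβ : 0 < β) (hB : 0 < B)
    (hx : exp β⁻¹ ≤ B * x) (hxy : x ≤ y) :
    y ^ (-β) * log (B * y) ≤ x ^ (-β) * log (B * x) := by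
  have hx0 : 0 < x := pos_of_mul_pos_right ((exp_pos _).trans_le hx) hB.le
  have hy0 : 0 < y := hx0.trans_le hxy
  have hscale : ∀ z, 0 < z →
      z ^ (-β) * log (B * z) = B ^ β * (log (B * z) / (B * z) ^ β) := by
    intro z hz
    rw [mul_rpow hB.le hz.le, rpow_neg hz.le]
    field_simp [(rpow_pos_of_pos hB β).ne']
  have hBxy : B * x ≤ B * y := by gcongr
  rw [hscale y hy0, hscale x hx0]
  exact mul_le_mul_of_nonneg_left (log_div_self_rpow_antitoneOn hβ hx (hx.trans hBxy) hBxy)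
    (by positivity)

lemma rpow_neg_half_mul_sqrt {x : ℝ} (hx : 0 ≤ x) (β L : ℝ) :
    x ^ (-(β / 2)) * √L = √(x ^ (-β) * L) := by
  rw [sqrt_mul (rpow_nonneg hx _), sqrt_eq_rpow (x ^ (-β)), ← rpow_mul hx]
  ring_nf

/-- The sequence `u` as a function of `x = n + 1`, with `d = (α - β) ℓ`. -/
def logRateProfile (β d B1 B2 B3 x : ℝ) : ℝ :=
  B1 * x ^ (-(β / 2)) * √(log (B2 * x)) + B3 * x ^ (-d)

section logRateProfile

variable {β d B1 B2 B3 x : ℝ}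

lemma logRateProfile_nonneg (hB1 : 0 ≤ B1) (hB3 : 0 ≤ B3) (hx : 0 ≤ x) :
    0 ≤ logRateProfile β d B1 B2 B3 x := by
  unfold logRateProfile
  positivity

lemma logRateProfile_le_mul_add_one {α E : ℝ} (hβ : 0 ≤ β) (hβα : β ≤ α) (hd : d ≤ β / 2)
    (hB1 : 0 ≤ B1) (hB2 : 0 < B2) (hB3 : 0 ≤ B3) (hx : 0 < x)
    (hE : (α - β + β / 2) / x ≤ E) :
    logRateProfile β d B1 B2 B3 x ≤
      ((x + 1) / x) ^ (β - α) * exp E * logRateProfile β d B1 B2 B3 (x + 1) := by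
  have hc : 0 ≤ α - β + β / 2 := by linarith
  have hfirst :=
    rpow_neg_le_mul_rpow_neg_add_one (γ := β / 2) (ρ := β - α) hx hc (by linarith) hE
  have hsecond :=
    rpow_neg_le_mul_rpow_neg_add_one (γ := d) (ρ := β - α) hx hc (by linarith) hE
  have hlog : √(log (B2 * x)) ≤ √(log (B2 * (x + 1))) :=
    sqrt_le_sqrt (log_le_log (by positivity) (by gcongr; linarith))
  unfold logRateProfile
  calc B1 * x ^ (-(β / 2)) * √(log (B2 * x)) + B3 * x ^ (-d)
      ≤ B1 * (((x + 1) / x) ^ (β - α) * exp E * (x + 1) ^ (-(β / 2))) * √(log (B2 * (x + 1)))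
        + B3 * (((x + 1) / x) ^ (β - α) * exp E * (x + 1) ^ (-d)) := by gcongr
    _ = _ := by ring

lemma logRateProfile_add_one_le (hβ : 0 < β) (hd : 0 ≤ d) (hB1 : 0 ≤ B1) (hB2 : 0 < B2)
    (hB3 : 0 ≤ B3) (hx : exp (1 / β) / B2 ≤ x) :
    logRateProfile β d B1 B2 B3 (x + 1) ≤ logRateProfile β d B1 B2 B3 x := by
  have hBx : exp β⁻¹ ≤ B2 * x := by rwa [← one_div, ← div_le_iff₀' hB2]
  have hx0 : 0 < x := (div_pos (exp_pos _) hB2).trans_le hx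
  have hlog := rpow_neg_mul_log_mul_le_of_le hβ hB2 hBx (le_add_of_nonneg_right zero_le_one)
  unfold logRateProfile
  rw [mul_assoc B1, mul_assoc B1, rpow_neg_half_mul_sqrt (x := x + 1) (by linarith),
    rpow_neg_half_mul_sqrt hx0.le]
  exact add_le_add (mul_le_mul_of_nonneg_left (sqrt_le_sqrt hlog) hB1)
    (mul_le_mul_of_nonneg_left (rpow_le_rpow_of_nonpos hx0 (by linarith) (by linarith)) hB3)

end logRateProfile

lemma div_succ_le_steps_mul_exp {α β d B1 B2 B3 : ℝ} {u : ℕ → ℝ}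
    (hu : ∀ n : ℕ, u n = logRateProfile β d B1 B2 B3 (n + 1))
    (hβ : 0 ≤ β) (hβα : β ≤ α) (hd : d ≤ β / 2)
    (hB1 : 0 ≤ B1) (hB2 : 0 < B2) (hB3 : 0 ≤ B3) (k : ℕ) {E : ℝ}
    (hE : (α - β + β / 2) / (k + 1) ≤ E) :
    u k / u (k + 1) ≤
      steps α (k + 1) / steps α k * (steps β k / steps β (k + 1)) * exp E := by
  have hx : (0 : ℝ) < k + 1 := by positivity
  have hfactor : steps α (k + 1) / steps α k * (steps β k / steps β (k + 1)) =
      ((k + 1 + 1) / (k + 1)) ^ (β - α) := by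
    unfold steps
    push_cast
    exact rpow_neg_div_mul_rpow_neg_div hx (by linarith) α β
  rw [hfactor]
  refine div_le_of_le_mul₀ ?_ (by positivity) ?_
  · rw [hu]
    exact logRateProfile_nonneg hB1 hB3 (by positivity)
  · rw [hu, hu]
    push_cast
    exact logRateProfile_le_mul_add_one hβ hβα hd hB1 hB2 hB3 hx hE

theorem stmt18_general (α β q1 q2 : ℝ)
    (hβ : 0 < β) (hβα : β < α) (hα : α < 1) (hq1 : 0 < q1) (hq2 : 0 < q2)
    (ℓ : ℕ) (hℓ : (ℓ : ℝ) ≤ β / (2 * (α - β)))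
    (B1 B2 B3 : ℝ) (hB1 : 0 ≤ B1) (hB3 : 0 ≤ B3) (hB2 : 1 ≤ B2)
    (u : ℕ → ℝ)
    (hu : ∀ n : ℕ, u n = B1 * ((n : ℝ) + 1) ^ (-(β / 2)) *
          Real.sqrt (Real.log (B2 * ((n : ℝ) + 1)))
        + B3 * ((n : ℝ) + 1) ^ (-((α - β) * ℓ)))
    (Kα Kβ : ℕ)
    (hKα : Kα = max ⌈(q1 / (2 * (α - β + β / 2))) ^ (1 / α)⌉₊
                    ⌈(4 * (α - β + β / 2) / q1) ^ (1 / (1 - α))⌉₊)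
    (hKβ : Kβ = max ⌈(q2 / (α - β + β / 2)) ^ (1 / β)⌉₊
                    ⌈(4 * (α - β + β / 2) / q2) ^ (1 / (1 - β))⌉₊) :
    AlphaModerateFrom α β q1 u Kα ∧ BetaModerateFrom α β q2 u Kβ ∧
      (∀ n : ℕ, Real.exp (1 / β) / B2 ≤ (n : ℝ) + 1 → u (n + 1) ≤ u n) := by
  have hu' : ∀ n : ℕ, u n = logRateProfile β ((α - β) * ℓ) B1 B2 B3 (n + 1) := hu
  have hαβ : 0 < α - β := sub_pos.2 hβα
  have hd : (α - β) * ℓ ≤ β / 2 :=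
    calc (α - β) * ℓ ≤ (α - β) * (β / (2 * (α - β))) := by gcongr
      _ = β / 2 := by field_simp
  have hc : 0 ≤ α - β + β / 2 := by linarith
  have hB2' : 0 < B2 := by linarith
  have hratio := div_succ_le_steps_mul_exp hu' hβ.le hβα.le hd hB1 hB2' hB3
  refine ⟨fun k hk => hratio k ?_, fun k hk => hratio k ?_, fun n hn => ?_⟩
  · rw [hKα, max_le_iff] at hk
    have hK := Nat.ceil_le.mp hk.2
    unfold steps
    push_cast
    exact div_le_half_mul_rpow_neg (by linarith) hα hq1 hc (by positivity) (by positivity)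
      (by linarith) (by linarith)
  · rw [hKβ, max_le_iff] at hk
    have hK := Nat.ceil_le.mp hk.2
    -- `k + 3 ≤ 2 (k + 1)` needs `k ≥ 1`, which the positive ceiling provides.
    have hk1 : (1 : ℝ) ≤ k := by exact_mod_cast (Nat.ceil_pos.mpr (by positivity)).trans_le hk.2
    unfold steps
    push_cast
    exact div_le_half_mul_rpow_neg hβ.le (by linarith) hq2 hc (by positivity) (by positivity)
      (by linarith) (by linarith)
  · rw [hu', hu']
    push_cast
    exact logRateProfile_add_one_le hβ (by positivity) hB1 hB2' hB3 hn

/-- Lemma `un satisfies condition 2`.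
Let `1 > α > β > 0`, `q₁, q₂ > 0`, let `ℓ` be a nonnegative integer with
`ℓ ≤ β/(2(α−β))`, and let
`u_n = B₁ (n+1)^{−β/2} √(ln (B₂(n+1))) + B₃ (n+1)^{−(α−β)ℓ}` where `B₁, B₃ ≥ 0` with at
least one strictly positive and `B₂ ≥ 1`.  Then `u` is `α`-moderate from
`K_α(β/2)` onwards and `β`-moderate from `K_β(β/2)` onwards, and `u` is monotonically
decreasing from `e^{1/β}/B₂` onwards. -/
theorem stmt18 (α β q1 q2 : ℝ)
    (hβ : 0 < β) (hβα : β < α) (hα : α < 1) (hq1 : 0 < q1) (hq2 : 0 < q2)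
    (ℓ : ℕ) (hℓ : (ℓ : ℝ) ≤ β / (2 * (α - β)))
    (B1 B2 B3 : ℝ) (hB1 : 0 ≤ B1) (hB3 : 0 ≤ B3) (hpos : 0 < B1 ∨ 0 < B3) (hB2 : 1 ≤ B2)
    (u : ℕ → ℝ)
    (hu : ∀ n : ℕ, u n = B1 * ((n : ℝ) + 1) ^ (-(β / 2)) *
          Real.sqrt (Real.log (B2 * ((n : ℝ) + 1)))
        + B3 * ((n : ℝ) + 1) ^ (-((α - β) * ℓ)))
    (Kα Kβ : ℕ)
    (hKα : Kα = max ⌈(q1 / (2 * (α - β + β / 2))) ^ (1 / α)⌉₊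
                    ⌈(4 * (α - β + β / 2) / q1) ^ (1 / (1 - α))⌉₊)
    (hKβ : Kβ = max ⌈(q2 / (α - β + β / 2)) ^ (1 / β)⌉₊
                    ⌈(4 * (α - β + β / 2) / q2) ^ (1 / (1 - β))⌉₊) :
    AlphaModerateFrom α β q1 u Kα ∧ BetaModerateFrom α β q2 u Kβ ∧
      (∀ n : ℕ, Real.exp (1 / β) / B2 ≤ (n : ℝ) + 1 → u (n + 1) ≤ u n) :=
  stmt18_general α β q1 q2 hβ hβα hα hq1 hq2 ℓ hℓ B1 B2 B3 hB1 hB3 hB2 u hu Kα Kβ hKα hKβ
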